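/- Let R be a commutative ring with identity and n ≥ 3 an integer. For any indices 1 ≤ i ≠ j ≤ 2n and any a ∈ R, there exists a subgroup U of the elementary symplectic group Ep_{2n}(R) which is nilpotent as a group and such that the symplectic elementary matrix ρ_{ij}(a) lies in the commutator subgroup [U,U]. -/

import Mathlib

open Matrix

namespace Paper

/-! ### Generalities -/

lemma one_add_mul_aux {M : Type*} [Ring M] {x y : M} (h1 : x + y = 0) (h2 : x * y = 0) :
    (1 + x) * (1 + y) = 1 := by
  have h : (1 + x) * (1 + y) = 1 + (x + y) + x * y := by noncomm_ring
  rw [h, h1, h2, add_zero, add_zero]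

/-- The group of self-homeomorphisms of a topological space, under composition. -/
instance homeomorphGroup (X : Type*) [TopologicalSpace X] : Group (X ≃ₜ X) where
  mul a b := b.trans a
  one := Homeomorph.refl X
  inv := Homeomorph.symm
  mul_assoc a b c := rfl
  one_mul a := Homeomorph.ext fun x => rfl
  mul_one a := Homeomorph.ext fun x => rfl
  inv_mul_cancel a := Homeomorph.ext fun x => a.symm_apply_apply x

section Elementary

variable (R : Type*) [Ring R]

lemma stdBasis_cancel (n : ℕ) (i j : Fin n) (a : R) :
    single i j a + single i j (-a) = 0 := by
  rw [← Matrix.single_add, add_neg_cancel, Matrix.single_zero]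

/-- The elementary matrix `e_{ij}(r) = 1 + r·E_{ij}` as an invertible matrix,
i.e. an element of `GL_n(R)`. -/
def elemGL (n : ℕ) (i j : Fin n) (hij : i ≠ j) (r : R) : (Matrix (Fin n) (Fin n) R)ˣ where
  val := 1 + single i j r
  inv := 1 + single i j (-r)
  val_inv := one_add_mul_aux (stdBasis_cancel R n i j r)
    (Matrix.single_mul_single_of_ne (c := r) i j _ (Ne.symm hij) (-r))
  inv_val := one_add_mul_aux
    (by have := stdBasis_cancel R n i j (-r); rwa [neg_neg] at this)
    (Matrix.single_mul_single_of_ne (c := (-r)) i j _ (Ne.symm hij) r)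

/-- The elementary group `E_n(R)`: the subgroup of `GL_n(R)` generated by all
elementary matrices. -/
def ElementaryGroup (n : ℕ) : Subgroup (Matrix (Fin n) (Fin n) R)ˣ :=
  Subgroup.closure { A | ∃ (i j : Fin n) (hij : i ≠ j) (r : R), A = elemGL R n i j hij r }

lemma elemGL_mem (n : ℕ) (i j : Fin n) (hij : i ≠ j) (r : R) :
    elemGL R n i j hij r ∈ ElementaryGroup R n :=
  Subgroup.subset_closure ⟨i, j, hij, r, rfl⟩

/-- The diagonal matrix with `-1` at places `i`, `j` and `1` elsewhere. -/
def negPairDiag (n : ℕ) (i j : Fin n) : Matrix (Fin n) (Fin n) R :=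
  Matrix.diagonal fun k => if k = i ∨ k = j then -1 else 1

lemma negPairDiag_mul_self (n : ℕ) (i j : Fin n) :
    negPairDiag R n i j * negPairDiag R n i j = 1 := by
  rw [negPairDiag, Matrix.diagonal_mul_diagonal]
  have h : (fun k => (if k = i ∨ k = j then (-1 : R) else 1) *
      (if k = i ∨ k = j then (-1 : R) else 1)) = fun _ => (1 : R) := by
    funext k
    by_cases h : k = i ∨ k = j <;> simp [h]
  rw [h, Matrix.diagonal_one]

/-- The matrix `negPairDiag` as an invertible matrix. -/
def negPairGL (n : ℕ) (i j : Fin n) : (Matrix (Fin n) (Fin n) R)ˣ :=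
  ⟨negPairDiag R n i j, negPairDiag R n i j,
    negPairDiag_mul_self R n i j, negPairDiag_mul_self R n i j⟩

/-- The matrix `A_{i,i+1}` (0-indexed: diagonal entries `i` and `i+1` equal `-1`). -/
def APair (n : ℕ) (i : Fin (n - 1)) : (Matrix (Fin n) (Fin n) R)ˣ :=
  negPairGL R n ⟨(i : ℕ), by have := i.isLt; omega⟩ ⟨(i : ℕ) + 1, by have := i.isLt; omega⟩

/-- `E_n(R, 2R)`: the smallest normal subgroup of `E_n(R)` containing all elementary
matrices `e_{ij}(s)` with `s ∈ 2R`. -/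
def RelElementaryGroup (n : ℕ) : Subgroup ↥(ElementaryGroup R n) :=
  Subgroup.normalClosure
    { x : ↥(ElementaryGroup R n) | ∃ (i j : Fin n) (hij : i ≠ j) (r : R),
        x.val = elemGL R n i j hij (2 * r) }

end Elementary

section Symplectic

variable (S : Type*) [CommRing S]

/-- The index involution `σ` on `{0, …, 2n-1}`: `σk = k + n` if `k < n`, else `σk = k - n`. -/
def sigIdx (n : ℕ) (k : Fin (2 * n)) : Fin (2 * n) :=
  if h : (k : ℕ) < n then ⟨(k : ℕ) + n, by omega⟩
  else ⟨(k : ℕ) - n, by have := k.isLt; omega⟩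

lemma sigIdx_ne (n : ℕ) (k : Fin (2 * n)) : sigIdx n k ≠ k := by
  have hk := k.isLt
  unfold sigIdx
  split_ifs with h <;>
    · intro hEq
      have h2 := congrArg Fin.val hEq
      simp only [Fin.val_mk] at h2 -- may need adjusting
      omega

lemma sigIdx_inj (n : ℕ) {k l : Fin (2 * n)} (h : k ≠ l) : sigIdx n k ≠ sigIdx n l := by
  have hk := k.isLt
  have hl := l.isLt
  have hkl : (k : ℕ) ≠ (l : ℕ) := fun hc => h (Fin.ext hc)
  unfold sigIdx
  split_ifs with h1 h2 h2 <;>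
    · intro hEq
      have h3 := congrArg Fin.val hEq
      simp only [Fin.val_mk] at h3
      omega

/-- The symplectic elementary matrix `ρ_{ij}(a)`, as a matrix.  When `j = σi` it is
`1 + a E_{i,σi}`; otherwise it is `1 + a E_{ij} - δ a E_{σj,σi}` where `δ = 1` if `i, j`
are on the same side of `n` and `δ = -1` otherwise. -/
def symElemMat (n : ℕ) (i j : Fin (2 * n)) (a : S) : Matrix (Fin (2 * n)) (Fin (2 * n)) S :=
  if j = sigIdx n i then 1 + single i j a
  else 1 + single i j a -
    single (sigIdx n j) (sigIdx n i)
      ((if ((i : ℕ) < n ↔ (j : ℕ) < n) then 1 else -1) * a)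

lemma symElemMat_mul_neg (n : ℕ) (i j : Fin (2 * n)) (hij : i ≠ j) (a : S) :
    symElemMat S n i j a * symElemMat S n i j (-a) = 1 := by
  unfold symElemMat
  set d : S := if ((i : ℕ) < n ↔ (j : ℕ) < n) then 1 else -1 with hd
  split_ifs with h
  · exact one_add_mul_aux (stdBasis_cancel S _ i j a)
      (Matrix.single_mul_single_of_ne (c := a) i j _ (Ne.symm hij) (-a))
  · rw [add_sub_assoc, add_sub_assoc]
    apply one_add_mul_aux
    · have c1 := stdBasis_cancel S _ i j a
      have c2 := stdBasis_cancel S _ (sigIdx n j) (sigIdx n i) (d * a)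
      rw [mul_neg]
      calc single i j a - single (sigIdx n j) (sigIdx n i) (d * a) +
            (single i j (-a) - single (sigIdx n j) (sigIdx n i) (-(d * a)))
          = (single i j a + single i j (-a)) -
            (single (sigIdx n j) (sigIdx n i) (d * a) +
              single (sigIdx n j) (sigIdx n i) (-(d * a))) := by abel
        _ = 0 := by rw [c1, c2, sub_zero]
    · simp only [sub_mul, mul_sub]
      rw [Matrix.single_mul_single_of_ne (c := a) i j _ (Ne.symm hij) (-a),
        Matrix.single_mul_single_of_ne (c := a) i j _ (Ne.symm (sigIdx_ne n j)) (d * -a),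
        Matrix.single_mul_single_of_ne (c := (d * a)) (sigIdx n j) (sigIdx n i) _ (sigIdx_ne n i) (-a),
        Matrix.single_mul_single_of_ne (c := (d * a)) (sigIdx n j) (sigIdx n i) _
          (sigIdx_inj n hij) (d * -a)]
      simp

/-- The symplectic elementary matrix `ρ_{ij}(a)` as an invertible matrix. -/
def symElemGL (n : ℕ) (i j : Fin (2 * n)) (hij : i ≠ j) (a : S) :
    (Matrix (Fin (2 * n)) (Fin (2 * n)) S)ˣ where
  val := symElemMat S n i j a
  inv := symElemMat S n i j (-a)
  val_inv := symElemMat_mul_neg S n i j hij a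
  inv_val := by have := symElemMat_mul_neg S n i j hij (-a); rwa [neg_neg] at this

/-- The elementary symplectic group `Ep_{2n}(S)`, generated by all symplectic
elementary matrices. -/
def EpGroup (n : ℕ) : Subgroup (Matrix (Fin (2 * n)) (Fin (2 * n)) S)ˣ :=
  Subgroup.closure
    { A | ∃ (i j : Fin (2 * n)) (hij : i ≠ j) (a : S), A = symElemGL S n i j hij a }

/-- The matrix `J = [[0, I_n], [-I_n, 0]]` of the standard symplectic form. -/
def Jmat (n : ℕ) : Matrix (Fin (2 * n)) (Fin (2 * n)) S :=
  Matrix.of fun i j =>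
    if (i : ℕ) + n = (j : ℕ) then 1 else if (j : ℕ) + n = (i : ℕ) then -1 else 0

/-- The symplectic group `Sp_{2n}(S)`: invertible `2n × 2n` matrices `M` with
`Mᵀ * J * M = J`. -/
def SpGroup (n : ℕ) : Subgroup (Matrix (Fin (2 * n)) (Fin (2 * n)) S)ˣ where
  carrier := { M | (↑M : Matrix (Fin (2 * n)) (Fin (2 * n)) S)ᵀ * Jmat S n * ↑M = Jmat S n }
  one_mem' := by simp
  mul_mem' := by
    intro a b ha hb
    show (↑(a * b) : Matrix (Fin (2 * n)) (Fin (2 * n)) S)ᵀ * Jmat S n *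
      (↑(a * b) : Matrix (Fin (2 * n)) (Fin (2 * n)) S) = Jmat S n
    rw [Units.val_mul, Matrix.transpose_mul]
    calc (↑b : Matrix (Fin (2*n)) (Fin (2*n)) S)ᵀ * (↑a : Matrix (Fin (2*n)) (Fin (2*n)) S)ᵀ *
          Jmat S n * (↑a * ↑b)
        = (↑b : Matrix (Fin (2*n)) (Fin (2*n)) S)ᵀ *
            ((↑a : Matrix (Fin (2*n)) (Fin (2*n)) S)ᵀ * Jmat S n * ↑a) * ↑b := by
          noncomm_ring
      _ = (↑b : Matrix (Fin (2*n)) (Fin (2*n)) S)ᵀ * Jmat S n * ↑b := by rw [ha]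
      _ = Jmat S n := hb
  inv_mem' := by
    intro a ha
    have ha' : (↑a : Matrix (Fin (2 * n)) (Fin (2 * n)) S)ᵀ * Jmat S n *
        (↑a : Matrix (Fin (2 * n)) (Fin (2 * n)) S) = Jmat S n := ha
    show ((a⁻¹ : (Matrix (Fin (2 * n)) (Fin (2 * n)) S)ˣ) :
        Matrix (Fin (2 * n)) (Fin (2 * n)) S)ᵀ * Jmat S n *
        ((a⁻¹ : (Matrix (Fin (2 * n)) (Fin (2 * n)) S)ˣ) :
        Matrix (Fin (2 * n)) (Fin (2 * n)) S) = Jmat S n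
    set A : Matrix (Fin (2 * n)) (Fin (2 * n)) S := ↑a with hA
    set B : Matrix (Fin (2 * n)) (Fin (2 * n)) S := ((a⁻¹ :
        (Matrix (Fin (2 * n)) (Fin (2 * n)) S)ˣ) : Matrix (Fin (2 * n)) (Fin (2 * n)) S) with hB
    have h1 : A * B = 1 := a.mul_inv
    calc Bᵀ * Jmat S n * B
        = Bᵀ * (Aᵀ * Jmat S n * A) * B := by rw [ha']
      _ = (A * B)ᵀ * Jmat S n * (A * B) := by rw [Matrix.transpose_mul]; noncomm_ring
      _ = Jmat S n := by rw [h1]; simp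

end Symplectic

section Extra

variable (R : Type*) [Ring R]

/-- Index of the `(2i-1)`-th row (1-indexed), i.e. `2i` 0-indexed. -/
def bIdx0 (k : ℕ) (i : Fin k) : Fin (2 * k) := ⟨2 * (i : ℕ), by have := i.isLt; omega⟩

def bIdx1 (k : ℕ) (i : Fin k) : Fin (2 * k) := ⟨2 * (i : ℕ) + 1, by have := i.isLt; omega⟩

lemma bIdx_ne (k : ℕ) (i : Fin k) : bIdx0 k i ≠ bIdx1 k i := by
  simp only [bIdx0, bIdx1, ne_eq, Fin.mk.injEq]
  omega

/-- The matrix `B_i = e_{2i-1,2i}(1) e_{2i,2i-1}(-1) e_{2i-1,2i}(1) e_{2i,2i-1}(-1)`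
(1-indexed) in `E_{2k}(R)`. -/
def Bmat (k : ℕ) (i : Fin k) : (Matrix (Fin (2 * k)) (Fin (2 * k)) R)ˣ :=
  elemGL R (2 * k) (bIdx0 k i) (bIdx1 k i) (bIdx_ne k i) 1 *
  elemGL R (2 * k) (bIdx1 k i) (bIdx0 k i) (bIdx_ne k i).symm (-1) *
  elemGL R (2 * k) (bIdx0 k i) (bIdx1 k i) (bIdx_ne k i) 1 *
  elemGL R (2 * k) (bIdx1 k i) (bIdx0 k i) (bIdx_ne k i).symm (-1)

end Extra

section SymplecticExtra

variable (S : Type*) [CommRing S]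

def cIdx0 (n : ℕ) (i : Fin n) : Fin (2 * n) := ⟨(i : ℕ), by have := i.isLt; omega⟩

def cIdx1 (n : ℕ) (i : Fin n) : Fin (2 * n) := ⟨n + (i : ℕ), by have := i.isLt; omega⟩

lemma cIdx_ne (n : ℕ) (i : Fin n) : cIdx0 n i ≠ cIdx1 n i := by
  have := i.pos
  simp only [cIdx0, cIdx1, ne_eq, Fin.mk.injEq]
  omega

/-- The matrix `C_i = ρ_{i,n+i}(1) ρ_{n+i,i}(-1) ρ_{i,n+i}(1) ρ_{n+i,i}(-1)` in
`Sp_{2n}(S)`. -/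
def Cmat (n : ℕ) (i : Fin n) : (Matrix (Fin (2 * n)) (Fin (2 * n)) S)ˣ :=
  symElemGL S n (cIdx0 n i) (cIdx1 n i) (cIdx_ne n i) 1 *
  symElemGL S n (cIdx1 n i) (cIdx0 n i) (cIdx_ne n i).symm (-1) *
  symElemGL S n (cIdx0 n i) (cIdx1 n i) (cIdx_ne n i) 1 *
  symElemGL S n (cIdx1 n i) (cIdx0 n i) (cIdx_ne n i).symm (-1)

/-- The equivalence `Fin n ⊕ Fin n ≃ Fin (2 * n)`. -/
def finDouble (n : ℕ) : Fin n ⊕ Fin n ≃ Fin (2 * n) :=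
  finSumFinEquiv.trans (finCongr (two_mul n).symm)

/-- The block-diagonal matrix `diag(A, B)` as a `2n × 2n` matrix. -/
def blockDiag2 (n : ℕ) (A B : Matrix (Fin n) (Fin n) S) :
    Matrix (Fin (2 * n)) (Fin (2 * n)) S :=
  Matrix.reindex (finDouble n) (finDouble n) (Matrix.fromBlocks A 0 0 B)

lemma blockDiag2_mul (n : ℕ) (A B A' B' : Matrix (Fin n) (Fin n) S) :
    blockDiag2 S n A B * blockDiag2 S n A' B' = blockDiag2 S n (A * A') (B * B') := by
  unfold blockDiag2
  rw [Matrix.reindex_apply, Matrix.reindex_apply, Matrix.reindex_apply,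
    Matrix.submatrix_mul_equiv, Matrix.fromBlocks_multiply]
  simp

lemma blockDiag2_one (n : ℕ) : blockDiag2 S n 1 1 = 1 := by
  unfold blockDiag2
  rw [Matrix.reindex_apply, Matrix.fromBlocks_one, Matrix.submatrix_one_equiv]

/-- The hyperbolic embedding `A ↦ diag(A, (Aᵀ)⁻¹) = diag(A, (A⁻¹)ᵀ)` from `GL_n(S)`
to `GL_{2n}(S)`. -/
def hypGL (n : ℕ) (A : (Matrix (Fin n) (Fin n) S)ˣ) :
    (Matrix (Fin (2 * n)) (Fin (2 * n)) S)ˣ where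
  val := blockDiag2 S n ↑A ((↑(A⁻¹) : Matrix (Fin n) (Fin n) S)ᵀ)
  inv := blockDiag2 S n ↑(A⁻¹) ((↑A : Matrix (Fin n) (Fin n) S)ᵀ)
  val_inv := by
    rw [blockDiag2_mul, ← Matrix.transpose_mul, A.mul_inv, Matrix.transpose_one,
      blockDiag2_one]
  inv_val := by
    rw [blockDiag2_mul, ← Matrix.transpose_mul, A.inv_mul, Matrix.transpose_one,
      blockDiag2_one]

end SymplecticExtra

/-!
Fix a height function on the indices. The units `M` for which `M - 1` only has entries `(p, q)`
with `ht p < ht q` form a nilpotent group: a commutator of an element moving heights by `≥ c`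
with one moving them by `≥ 1` moves them by `≥ c + 1`. Order six indices as
`i < k < j < σj < σk < σi`; every elementary matrix among them that respects this order lies in
that group, and `ρ_{ij}(a) = ⁅ρ_{ik}(a), ρ_{kj}(1)⁆`. For a long root, order
`i < k < l < σl < σk < σi`; then `⁅ρ_{ik}(1), ρ_{k,σk}(δb)⁆ = ρ_{i,σk}(δb) ρ_{i,σi}(b)`, and
the short root `ρ_{i,σk}` is a commutator by the first case.
-/

open scoped commutatorElement

lemma val_commutatorElement_one_add {M : Type*} [Ring M] {u v : Mˣ} {X Y : M}
    (hu : (u : M) = 1 + X) (hu' : u.inv = 1 - X) (hv : (v : M) = 1 + Y)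
    (hv' : v.inv = 1 - Y) :
    ((⁅u, v⁆ : Mˣ) : M) = 1 + (X * Y - Y * X) - X * Y * X + Y * X * Y + X * Y * X * Y := by
  have hX : X * X = 0 := by
    calc X * X = 1 - (1 + X) * (1 - X) := by noncomm_ring
      _ = 0 := by rw [← hu, ← hu', Units.val_inv, sub_self]
  have hY : Y * Y = 0 := by
    calc Y * Y = 1 - (1 + Y) * (1 - Y) := by noncomm_ring
      _ = 0 := by rw [← hv, ← hv', Units.val_inv, sub_self]
  rw [commutatorElement_def, Units.val_mul, Units.val_mul, Units.val_mul, ← Units.inv_eq_val_inv,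
    ← Units.inv_eq_val_inv, hu, hv, hu', hv']
  calc (1 + X) * (1 + Y) * (1 - X) * (1 - Y)
      = 1 + (X * Y - Y * X) - X * Y * X + Y * X * Y + X * Y * X * Y
          + X * X * (Y - 1) - (1 + X) * (Y * Y) := by noncomm_ring
    _ = _ := by rw [hX, hY, zero_mul, mul_zero, add_zero, sub_zero]

section Unipotent

variable {ι R : Type*} [Ring R] (ht : ι → ℕ)

def raisingMatrices (c : ℕ) : AddSubgroup (Matrix ι ι R) where
  carrier := {X | ∀ p q, X p q ≠ 0 → ht p + c ≤ ht q}
  zero_mem' := by simp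
  add_mem' {X Y} hX hY p q hpq := by
    by_cases hXpq : X p q = 0
    · exact hY p q (by simpa [hXpq] using hpq)
    · exact hX p q hXpq
  neg_mem' {X} hX p q hpq := hX p q (by simpa using hpq)

variable {ht}

lemma raisingMatrices_antitone : Antitone (raisingMatrices (R := R) ht) :=
  fun _ _ hcd _ hX p q hpq => (Nat.add_le_add_left hcd _).trans (hX p q hpq)

lemma raisingMatrices_eq_bot {c : ℕ} (hc : ∀ p, ht p < c) :
    raisingMatrices (R := R) ht c = ⊥ := by
  refine eq_bot_iff.2 fun X hX => ?_
  ext p q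
  by_contra hpq
  have := hX p q hpq
  have := hc q
  omega

lemma mul_mem_raisingMatrices [Fintype ι] {c d : ℕ} {X Y : Matrix ι ι R}
    (hX : X ∈ raisingMatrices ht c) (hY : Y ∈ raisingMatrices ht d) :
    X * Y ∈ raisingMatrices ht (c + d) := by
  intro p q hpq
  obtain ⟨r, -, hr⟩ := Finset.exists_ne_zero_of_sum_ne_zero hpq
  have hpr := hX p r (left_ne_zero_of_mul hr)
  have hrq := hY r q (right_ne_zero_of_mul hr)
  omega

variable [DecidableEq ι]

lemma single_mem_raisingMatrices {c : ℕ} {p q : ι} (hpq : ht p + c ≤ ht q) (a : R) :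
    single p q a ∈ raisingMatrices ht c := by
  intro p' q' hne
  obtain ⟨rfl, rfl⟩ : p = p' ∧ q = q' := by
    by_contra h
    exact hne (single_apply_of_ne _ _ _ _ _ h)
  exact hpq

lemma one_mem_raisingMatrices_zero : (1 : Matrix ι ι R) ∈ raisingMatrices ht 0 := by
  intro p q hpq
  obtain rfl : p = q := by
    by_contra h
    exact hpq (one_apply_ne h)
  exact le_rfl

variable [Fintype ι]

def unipotentSubmonoid (ht : ι → ℕ) (c : ℕ) : Submonoid (Matrix ι ι R) where
  carrier := {M | M - 1 ∈ raisingMatrices ht (c + 1)}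
  one_mem' := by simp
  mul_mem' {M N} hM hN := by
    have h : M * N - 1 = (M - 1) * (N - 1) + (M - 1) + (N - 1) := by noncomm_ring
    show M * N - 1 ∈ raisingMatrices ht (c + 1)
    rw [h]
    exact add_mem (add_mem (raisingMatrices_antitone (by omega) (mul_mem_raisingMatrices hM hN))
      hM) hN

def unipotentSubgroup (ht : ι → ℕ) (c : ℕ) : Subgroup (Matrix ι ι R)ˣ :=
  (unipotentSubmonoid ht c).units

lemma mem_raisingMatrices_zero_of_mem_unipotentSubmonoid {M : Matrix ι ι R}
    (hM : M ∈ unipotentSubmonoid ht 0) : M ∈ raisingMatrices ht 0 := by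
  simpa using add_mem (raisingMatrices_antitone (Nat.zero_le 1) hM) one_mem_raisingMatrices_zero

lemma val_commutatorElement_sub_one_mem {x g : (Matrix ι ι R)ˣ} {c d : ℕ}
    (hx : (x : Matrix ι ι R) - 1 ∈ raisingMatrices ht c)
    (hg : (g : Matrix ι ι R) - 1 ∈ raisingMatrices ht d)
    (hxg : x.inv * g.inv ∈ raisingMatrices ht 0) :
    ((⁅x, g⁆ : (Matrix ι ι R)ˣ) : Matrix ι ι R) - 1 ∈ raisingMatrices ht (c + d) := by
  have hone : (g * x * (x.inv * g.inv) : Matrix ι ι R) = 1 := by simp [mul_assoc]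
  have h : ((⁅x, g⁆ : (Matrix ι ι R)ˣ) : Matrix ι ι R) - 1 =
      ((x - 1) * (g - 1) - (g - 1) * (x - 1)) * (x.inv * g.inv) := by
    calc ((⁅x, g⁆ : (Matrix ι ι R)ˣ) : Matrix ι ι R) - 1
        = x * g * (x.inv * g.inv) - g * x * (x.inv * g.inv) := by
          rw [hone, commutatorElement_def]
          simp only [Units.val_mul, mul_assoc, Units.inv_eq_val_inv]
      _ = _ := by noncomm_ring
  rw [h, ← add_zero (c + d)]
  exact mul_mem_raisingMatrices (sub_mem (mul_mem_raisingMatrices hx hg)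
    (add_comm d c ▸ mul_mem_raisingMatrices hg hx)) hxg

lemma commutatorElement_mem_unipotentSubgroup {x g : (Matrix ι ι R)ˣ} {c : ℕ}
    (hx : x ∈ unipotentSubgroup ht c) (hg : g ∈ unipotentSubgroup ht 0) :
    ⁅x, g⁆ ∈ unipotentSubgroup ht (c + 1) := by
  have hxg : ∀ {u v : (Matrix ι ι R)ˣ}, u ∈ unipotentSubgroup ht 0 →
      v ∈ unipotentSubgroup ht 0 → u.inv * v.inv ∈ raisingMatrices ht 0 := fun hu hv =>
    mem_raisingMatrices_zero_of_mem_unipotentSubmonoid (inv_mem (mul_mem hv hu)).1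
  have hx0 : x ∈ unipotentSubgroup ht 0 :=
    Submonoid.units_mono (fun _ hM => raisingMatrices_antitone (by omega) hM) hx
  refine (Submonoid.mem_units_iff _ _).2
    ⟨val_commutatorElement_sub_one_mem hx.1 hg.1 (hxg hx0 hg), ?_⟩
  rw [commutatorElement_inv]
  exact raisingMatrices_antitone (by omega)
    (val_commutatorElement_sub_one_mem hg.1 hx.1 (hxg hg hx0))

lemma lowerCentralSeries_le_unipotentSubgroup {H : Subgroup (Matrix ι ι R)ˣ}
    (hH : H ≤ unipotentSubgroup ht 0) (c : ℕ) :
    H.lowerCentralSeries c ≤ unipotentSubgroup ht c := by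
  induction c with
  | zero => exact hH
  | succ c ih =>
    rw [Subgroup.lowerCentralSeries_succ, Subgroup.commutator_le]
    exact fun x hx g hg => commutatorElement_mem_unipotentSubgroup (ih hx) (hH hg)

lemma unipotentSubgroup_eq_bot {c : ℕ} (hc : ∀ p, ht p ≤ c) :
    unipotentSubgroup (R := R) ht c = ⊥ := by
  refine eq_bot_iff.2 fun x hx => ?_
  have h : (x : Matrix ι ι R) - 1 ∈ (⊥ : AddSubgroup (Matrix ι ι R)) :=
    raisingMatrices_eq_bot (R := R) (c := c + 1) (fun p => Nat.lt_succ_of_le (hc p)) ▸ hx.1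
  exact Subgroup.mem_bot.2 (Units.ext (sub_eq_zero.1 (AddSubgroup.mem_bot.1 h)))

lemma isNilpotent_of_le_unipotentSubgroup {H : Subgroup (Matrix ι ι R)ˣ}
    (hH : H ≤ unipotentSubgroup ht 0) : Group.IsNilpotent H :=
  Subgroup.isNilpotent_of_lowerCentralSeries_eq_bot <| eq_bot_iff.2 <|
    (lowerCentralSeries_le_unipotentSubgroup hH _).trans
      (unipotentSubgroup_eq_bot (c := Finset.univ.sup ht) fun p =>
        Finset.le_sup (Finset.mem_univ p)).le

end Unipotent

section Symplectic

variable {S : Type*} [CommRing S] {n : ℕ}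

lemma sigIdx_involutive : Function.Involutive (sigIdx n) := by
  intro k
  have hk := k.isLt
  unfold sigIdx
  split_ifs with _ h h <;> ext <;> simp only at h ⊢ <;> omega

lemma val_sigIdx_lt_iff (k : Fin (2 * n)) : (sigIdx n k : ℕ) < n ↔ ¬(k : ℕ) < n := by
  have hk := k.isLt
  unfold sigIdx
  split_ifs <;> simp only <;> omega

lemma ne_sigIdx_comm {k l : Fin (2 * n)} (h : k ≠ sigIdx n l) : l ≠ sigIdx n k :=
  fun hc => h (sigIdx_involutive.eq_iff.1 hc.symm)

-- the sign `δ` in the definition of `ρ_{ij}`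
def sideSign (n : ℕ) (i j : Fin (2 * n)) : S :=
  if ((i : ℕ) < n ↔ (j : ℕ) < n) then 1 else -1

lemma sideSign_mul_sideSign (i j k : Fin (2 * n)) :
    (sideSign n i j : S) * sideSign n j k = sideSign n i k := by
  by_cases hi : (i : ℕ) < n <;> by_cases hj : (j : ℕ) < n <;> by_cases hk : (k : ℕ) < n <;>
    simp [sideSign, hi, hj, hk]

lemma sideSign_mul_self (i j : Fin (2 * n)) : (sideSign n i j : S) * sideSign n i j = 1 := by
  by_cases hi : (i : ℕ) < n <;> by_cases hj : (j : ℕ) < n <;> simp [sideSign, hi, hj]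

lemma sideSign_sigIdx_right (i k : Fin (2 * n)) :
    (sideSign n i (sigIdx n k) : S) = -sideSign n i k := by
  by_cases hi : (i : ℕ) < n <;> by_cases hk : (k : ℕ) < n <;>
    simp [sideSign, val_sigIdx_lt_iff, hi, hk]

variable {i j : Fin (2 * n)}

lemma symElemGL_inv (hij : i ≠ j) (a : S) :
    (symElemGL S n i j hij a)⁻¹ = symElemGL S n i j hij (-a) :=
  Units.ext rfl

lemma val_symElemGL_of_ne (hij : i ≠ j) (hj : j ≠ sigIdx n i) (a : S) :
    (symElemGL S n i j hij a : Matrix (Fin (2 * n)) (Fin (2 * n)) S) =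
      1 + (single i j a - single (sigIdx n j) (sigIdx n i) (sideSign n i j * a)) := by
  rw [← add_sub_assoc]
  exact if_neg hj

lemma val_inv_symElemGL_of_ne (hij : i ≠ j) (hj : j ≠ sigIdx n i) (a : S) :
    (symElemGL S n i j hij a).inv =
      1 - (single i j a - single (sigIdx n j) (sigIdx n i) (sideSign n i j * a)) := by
  rw [Units.inv_eq_val_inv, symElemGL_inv, val_symElemGL_of_ne hij hj, mul_neg, ← single_neg,
    ← single_neg]
  abel

lemma val_symElemGL_sigIdx (hi : i ≠ sigIdx n i) (a : S) :
    (symElemGL S n i (sigIdx n i) hi a : Matrix (Fin (2 * n)) (Fin (2 * n)) S) =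
      1 + single i (sigIdx n i) a :=
  if_pos rfl

lemma val_inv_symElemGL_sigIdx (hi : i ≠ sigIdx n i) (a : S) :
    (symElemGL S n i (sigIdx n i) hi a).inv =
      1 - single i (sigIdx n i) a := by
  rw [Units.inv_eq_val_inv, symElemGL_inv, val_symElemGL_sigIdx, ← single_neg, sub_eq_add_neg]

lemma symElemGL_mem_EpGroup (hij : i ≠ j) (a : S) : symElemGL S n i j hij a ∈ EpGroup S n :=
  Subgroup.subset_closure ⟨i, j, hij, a, rfl⟩

lemma commutatorElement_symElemGL_of_ne {i j k : Fin (2 * n)} (hij : i ≠ j) (hik : i ≠ k)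
    (hkj : k ≠ j) (hj : j ≠ sigIdx n i) (hk : k ≠ sigIdx n i) (hk' : k ≠ sigIdx n j)
    (a : S) :
    ⁅symElemGL S n i k hik a, symElemGL S n k j hkj 1⁆ = symElemGL S n i j hij a := by
  have hj' : j ≠ sigIdx n k := ne_sigIdx_comm hk'
  have hi' : i ≠ sigIdx n k := ne_sigIdx_comm hk
  have hσij : sigIdx n i ≠ sigIdx n j := sigIdx_inj n hij
  apply Units.ext
  rw [val_commutatorElement_one_add (val_symElemGL_of_ne hik hk a)
    (val_inv_symElemGL_of_ne hik hk a) (val_symElemGL_of_ne hkj hj' 1)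
    (val_inv_symElemGL_of_ne hkj hj' 1), val_symElemGL_of_ne hij hj a]
  set X := single i k a - single (sigIdx n k) (sigIdx n i) (sideSign n i k * a)
  set Y := single k j (1 : S) - single (sigIdx n j) (sigIdx n k) (sideSign n k j * 1)
  have hXY : X * Y = single i j a := by
    simp [X, Y, sub_mul, mul_sub, hk', hk.symm, hσij]
  have hYX : Y * X = single (sigIdx n j) (sigIdx n i) (sideSign n i j * a) := by
    simp [X, Y, sub_mul, mul_sub, hij.symm, hj', hi'.symm, ← sideSign_mul_sideSign i k j,
      mul_assoc, mul_left_comm]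
  have hXYX : X * Y * X = 0 := by
    simp [hXY, X, mul_sub, hij.symm, hj']
  have hYXY : Y * X * Y = 0 := by
    rw [hYX]
    simp [Y, mul_sub, hk.symm, hσij]
  rw [hXYX, hYXY, hXY, hYX]
  simp

lemma commutatorElement_symElemGL_sigIdx {i k : Fin (2 * n)} (hik : i ≠ k)
    (hk : k ≠ sigIdx n i) (b : S) :
    ⁅symElemGL S n i k hik 1, symElemGL S n k (sigIdx n k) (sigIdx_ne n k).symm b⁆ =
      symElemGL S n i (sigIdx n k) (ne_sigIdx_comm hk) b *
        symElemGL S n i (sigIdx n i) (sigIdx_ne n i).symm (sideSign n i k * b) := by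
  have hi' : i ≠ sigIdx n k := ne_sigIdx_comm hk
  have hσik : sigIdx n i ≠ sigIdx n k := sigIdx_inj n hik
  have hkσ : k ≠ sigIdx n k := (sigIdx_ne n k).symm
  have hiσ : i ≠ sigIdx n i := (sigIdx_ne n i).symm
  apply Units.ext
  rw [val_commutatorElement_one_add (val_symElemGL_of_ne hik hk 1)
    (val_inv_symElemGL_of_ne hik hk 1) (val_symElemGL_sigIdx hkσ b)
    (val_inv_symElemGL_sigIdx hkσ b), Units.val_mul, val_symElemGL_of_ne hi' hσik.symm,
    val_symElemGL_sigIdx, sigIdx_involutive k, sideSign_sigIdx_right]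
  set X := single i k (1 : S) - single (sigIdx n k) (sigIdx n i) (sideSign n i k * 1)
  set Y := single k (sigIdx n k) b
  have hXY : X * Y = single i (sigIdx n k) b := by
    simp [X, Y, sub_mul, hk.symm]
  have hYX : Y * X = -single k (sigIdx n i) (sideSign n i k * b) := by
    simp [X, Y, mul_sub, hi'.symm, mul_comm]
  have hXYX : X * Y * X = -single i (sigIdx n i) (sideSign n i k * b) := by
    rw [hXY]
    simp [X, mul_sub, hi'.symm, mul_comm]
  have hYXY : Y * X * Y = 0 := by
    rw [hYX]
    simp [Y, hk.symm]
  rw [hXYX, hYXY, hXY, hYX]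
  simp [Y, mul_add, add_mul, ← single_neg, hi'.symm, hiσ.symm, hk.symm]

lemma exists_ne_sigIdx (hn : 3 ≤ n) (a b : Fin (2 * n)) :
    ∃ k, k ≠ a ∧ k ≠ b ∧ k ≠ sigIdx n a ∧ k ≠ sigIdx n b := by
  obtain ⟨k, -, hk⟩ := Finset.exists_mem_notMem_of_card_lt_card
    (s := {a, b, sigIdx n a, sigIdx n b}) (t := Finset.univ)
    ((Finset.card_le_four).trans_lt (by simp; omega))
  exact ⟨k, by simpa [not_or] using hk⟩

lemma exists_height_of_isotropic {x y z : Fin (2 * n)} (hxy : x ≠ y) (hxz : x ≠ z)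
    (hyz : y ≠ z) (hyx : y ≠ sigIdx n x) (hzx : z ≠ sigIdx n x) (hzy : z ≠ sigIdx n y) :
    ∃ ht : Fin (2 * n) → ℕ, ht x < ht y ∧ ht y < ht z ∧ ht z < ht (sigIdx n z) ∧
      ht (sigIdx n z) < ht (sigIdx n y) ∧ ht (sigIdx n y) < ht (sigIdx n x) := by
  refine ⟨fun p => if p = x then 0 else if p = y then 1 else if p = z then 2 else
    if p = sigIdx n z then 3 else if p = sigIdx n y then 4 else 5, ?_⟩
  simp [hxy.symm, hxz.symm, hyz.symm, ne_sigIdx_comm hyx, ne_sigIdx_comm hzx,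
    ne_sigIdx_comm hzy, sigIdx_involutive.eq_iff, sigIdx_involutive y, sigIdx_involutive z,
    (sigIdx_ne n x).symm, (sigIdx_ne n y).symm, (sigIdx_ne n z).symm,
    hxy, hxz, hyz, hyx, hzx, hzy]

end Symplectic

section Membership

variable (S : Type*) [CommRing S]

def unipotentEpGroup (n : ℕ) (ht : Fin (2 * n) → ℕ) :
    Subgroup (Matrix (Fin (2 * n)) (Fin (2 * n)) S)ˣ :=
  unipotentSubgroup ht 0 ⊓ EpGroup S n

variable {S} {n : ℕ} {ht : Fin (2 * n) → ℕ} {i j : Fin (2 * n)}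

lemma symElemGL_mem_unipotentEpGroup (hij : i ≠ j)
    (h : ∀ b : S, (symElemGL S n i j hij b : Matrix (Fin (2 * n)) (Fin (2 * n)) S) - 1 ∈
      raisingMatrices ht 1) (a : S) :
    symElemGL S n i j hij a ∈ unipotentEpGroup S n ht :=
  ⟨(Submonoid.mem_units_iff _ _).2 ⟨h a, symElemGL_inv hij a ▸ h (-a)⟩,
    symElemGL_mem_EpGroup hij a⟩

lemma symElemGL_mem_unipotentEpGroup_of_ne (hij : i ≠ j) (hj : j ≠ sigIdx n i)
    (h₁ : ht i < ht j) (h₂ : ht (sigIdx n j) < ht (sigIdx n i)) (a : S) :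
    symElemGL S n i j hij a ∈ unipotentEpGroup S n ht := by
  refine symElemGL_mem_unipotentEpGroup hij (fun b => ?_) a
  rw [val_symElemGL_of_ne hij hj, add_sub_cancel_left]
  exact sub_mem (single_mem_raisingMatrices (by omega) _) (single_mem_raisingMatrices (by omega) _)

lemma symElemGL_sigIdx_mem_unipotentEpGroup (hi : i ≠ sigIdx n i)
    (h : ht i < ht (sigIdx n i)) (a : S) :
    symElemGL S n i (sigIdx n i) hi a ∈ unipotentEpGroup S n ht := by
  refine symElemGL_mem_unipotentEpGroup hi (fun b => ?_) a
  rw [val_symElemGL_sigIdx hi, add_sub_cancel_left]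
  exact single_mem_raisingMatrices (by omega) _

lemma symElemGL_mem_commutator_of_ne {k : Fin (2 * n)} (hij : i ≠ j) (hj : j ≠ sigIdx n i)
    (hk : k ≠ sigIdx n i) (hk' : k ≠ sigIdx n j) (h₁ : ht i < ht k) (h₂ : ht k < ht j)
    (h₃ : ht (sigIdx n j) < ht (sigIdx n k)) (h₄ : ht (sigIdx n k) < ht (sigIdx n i)) (a : S) :
    symElemGL S n i j hij a ∈ ⁅unipotentEpGroup S n ht, unipotentEpGroup S n ht⁆ := by
  have hik : i ≠ k := ne_of_apply_ne ht h₁.ne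
  have hkj : k ≠ j := ne_of_apply_ne ht h₂.ne
  rw [← commutatorElement_symElemGL_of_ne hij hik hkj hj hk hk' a]
  exact Subgroup.commutator_mem_commutator
    (symElemGL_mem_unipotentEpGroup_of_ne hik hk h₁ h₄ a)
    (symElemGL_mem_unipotentEpGroup_of_ne hkj (ne_sigIdx_comm hk') h₂ h₃ 1)

lemma symElemGL_sigIdx_mem_commutator {k : Fin (2 * n)} (hk : k ≠ sigIdx n i)
    (h₁ : ht i < ht k) (h₂ : ht k < ht (sigIdx n k)) (h₃ : ht (sigIdx n k) < ht (sigIdx n i))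
    (hshort : ∀ b : S, symElemGL S n i (sigIdx n k) (ne_sigIdx_comm hk) b ∈
      ⁅unipotentEpGroup S n ht, unipotentEpGroup S n ht⁆) (a : S) :
    symElemGL S n i (sigIdx n i) (sigIdx_ne n i).symm a ∈
      ⁅unipotentEpGroup S n ht, unipotentEpGroup S n ht⁆ := by
  have hik : i ≠ k := ne_of_apply_ne ht h₁.ne
  have key := commutatorElement_symElemGL_sigIdx hik hk (sideSign n i k * a)
  rw [← mul_assoc, sideSign_mul_self, one_mul] at key
  rw [eq_inv_mul_of_mul_eq key.symm]
  exact mul_mem (inv_mem (hshort _)) (Subgroup.commutator_mem_commutator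
    (symElemGL_mem_unipotentEpGroup_of_ne hik hk h₁ h₃ 1)
    (symElemGL_sigIdx_mem_unipotentEpGroup _ h₂ _))

end Membership

/-- For a commutative ring `S`, `n ≥ 3` and any `i ≠ j` in `Fin (2n)`,
`a ∈ S`, there is a nilpotent subgroup `U` of `Ep_{2n}(S)` with `ρ_{ij}(a) ∈ [U, U]`. -/
theorem statement3 (S : Type*) [CommRing S] (n : ℕ) (hn : 3 ≤ n) (i j : Fin (2 * n))
    (hij : i ≠ j) (a : S) :
    ∃ U : Subgroup (Matrix (Fin (2 * n)) (Fin (2 * n)) S)ˣ, U ≤ EpGroup S n ∧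
      Group.IsNilpotent ↥U ∧ symElemGL S n i j hij a ∈ ⁅U, U⁆ := by
  by_cases hj : j = sigIdx n i
  · subst hj
    obtain ⟨k, hki, -, hkσi, -⟩ := exists_ne_sigIdx hn i i
    obtain ⟨l, hli, hlk, hlσi, hlσk⟩ := exists_ne_sigIdx hn i k
    obtain ⟨ht, h₁, h₂, h₃, h₄, h₅⟩ :=
      exists_height_of_isotropic hki.symm hli.symm hlk.symm hkσi hlσi hlσk
    have hσσk : sigIdx n (sigIdx n k) = k := sigIdx_involutive k
    have hshort (b : S) := symElemGL_mem_commutator_of_ne (ht := ht) (ne_sigIdx_comm hkσi)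
      (sigIdx_inj n hki) hlσi (by rwa [hσσk]) (by omega) (by omega) (by rw [hσσk]; omega)
      (by omega) b
    exact ⟨unipotentEpGroup S n ht, inf_le_right, isNilpotent_of_le_unipotentSubgroup inf_le_left,
      symElemGL_sigIdx_mem_commutator hkσi h₁ (by omega) h₅ hshort a⟩
  · obtain ⟨k, hki, hkj, hkσi, hkσj⟩ := exists_ne_sigIdx hn i j
    obtain ⟨ht, h₁, h₂, h₃, h₄, h₅⟩ :=
      exists_height_of_isotropic hki.symm hij hkj hkσi hj (ne_sigIdx_comm hkσj)
    exact ⟨unipotentEpGroup S n ht, inf_le_right, isNilpotent_of_le_unipotentSubgroup inf_le_left,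
      symElemGL_mem_commutator_of_ne hij hj hkσi hkσj h₁ h₂ h₄ h₅ a⟩

end Paper
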